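/- arXiv:0806.0508 — 2 statements merged into one kernel-verified Lean document; each statement's English description precedes it below -/
import Mathlib

section
/- Let f, g : ℕ → ℂ and let s be a complex number such that both series ∑_{n≥1} f(n)/(ξ(n)·n^s) and ∑_{n≥1} g(n)/(ξ(n)·n^s) converge absolutely. Then (∑_{n≥1} f(n)/(ξ(n)·n^s)) · (∑_{n≥1} g(n)/(ξ(n)·n^s)) = ∑_{n≥1} (f ∘ g)(n)/(ξ(n)·n^s). -/
/-- `ξ(n) = ∏_p ν_p(n)!`. -/
def xi (n : ℕ) : ℕ := ∏ p ∈ n.primeFactors, Nat.factorial (n.factorization p)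

/-- `∏_p C(ν_p(n), ν_p(d))`. -/
def binomCoeff (n d : ℕ) : ℕ :=
  ∏ p ∈ n.primeFactors, Nat.choose (n.factorization p) (d.factorization p)

/-- The binomial convolution. -/
noncomputable def bconv (f g : ℕ → ℂ) (n : ℕ) : ℂ :=
  ∑ d ∈ n.divisors, (binomCoeff n d : ℂ) * f d * g (n / d)

/-- The terms of the exponential Dirichlet series `D̃(f,s) = ∑_{n≥1} f(n)/(ξ(n)·n^s)`. -/
noncomputable def edsTerm (f : ℕ → ℂ) (s : ℂ) (n : ℕ) : ℂ :=
  f n / ((xi n : ℂ) * (n : ℂ) ^ s)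

lemma xi_ne_zero (n : ℕ) : xi n ≠ 0 :=
  Finset.prod_ne_zero_iff.mpr fun p _ => Nat.factorial_ne_zero _

lemma xi_eq_prod_over {n : ℕ} (d : ℕ) (hd : d ∣ n) (hn : n ≠ 0) :
    xi d = ∏ p ∈ n.primeFactors, Nat.factorial (d.factorization p) := by
  unfold xi
  refine Finset.prod_subset (Nat.primeFactors_mono hd hn) fun p _ hp => ?_
  rw [← Nat.support_factorization, Finsupp.notMem_support_iff] at hp
  simp [hp]

lemma binom_mul_xi {n d : ℕ} (hd : d ∣ n) (hn : n ≠ 0) :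
    binomCoeff n d * (xi d * xi (n / d)) = xi n := by
  have hd0 : d ≠ 0 := by rintro rfl; exact hn (zero_dvd_iff.mp hd)
  rw [xi_eq_prod_over d hd hn, xi_eq_prod_over (n / d) (Nat.div_dvd_of_dvd hd) hn]
  unfold binomCoeff xi
  rw [← Finset.prod_mul_distrib, ← Finset.prod_mul_distrib]
  refine Finset.prod_congr rfl fun p _ => ?_
  have hle : d.factorization p ≤ n.factorization p :=
    (Nat.factorization_le_iff_dvd hd0 hn).mpr hd p
  rw [Nat.factorization_div hd, Finsupp.tsub_apply, ← mul_assoc,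
    Nat.choose_mul_factorial_mul_factorial hle]

open LSeries LSeries.notation in
/-- If the exponential Dirichlet series of `f` and `g` converge absolutely at `s`, then
their product is the exponential Dirichlet series of the binomial convolution `f ∘ g`:
`D̃(f,s)·D̃(g,s) = D̃(f ∘ g, s)`. -/
theorem eds_mul_eds_eq_eds_bconv (f g : ℕ → ℂ) (s : ℂ)
    (hf : Summable fun n : ℕ => ‖edsTerm f s (n + 1)‖)
    (hg : Summable fun n : ℕ => ‖edsTerm g s (n + 1)‖) :
    (∑' n : ℕ, edsTerm f s (n + 1)) * (∑' n : ℕ, edsTerm g s (n + 1)) =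
      ∑' n : ℕ, edsTerm (bconv f g) s (n + 1) := by
  set F : ℕ → ℂ := fun n => f n / (xi n : ℂ) with hF
  set G : ℕ → ℂ := fun n => g n / (xi n : ℂ) with hG
  have hTermF : ∀ n : ℕ, n ≠ 0 → term F s n = edsTerm f s n := fun n hn => by
    rw [term_of_ne_zero hn, edsTerm, hF, div_div]
  have hTermG : ∀ n : ℕ, n ≠ 0 → term G s n = edsTerm g s n := fun n hn => by
    rw [term_of_ne_zero hn, edsTerm, hG, div_div]
  have hTermC : ∀ n : ℕ, n ≠ 0 → term (F ⍟ G) s n = edsTerm (bconv f g) s n := by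
    intro n hn
    have hconv : (F ⍟ G) n = bconv f g n / (xi n : ℂ) := by
      rw [convolution_def, bconv, Finset.sum_div]
      show ∑ p ∈ n.divisorsAntidiagonal, F p.1 * G p.2 = _
      rw [Nat.sum_divisorsAntidiagonal (f := fun a b => F a * G b)]
      refine Finset.sum_congr rfl fun d hd => ?_
      have hdvd : d ∣ n := (Nat.mem_divisors.mp hd).1
      have key : ((binomCoeff n d : ℂ)) * ((xi d : ℂ) * (xi (n / d) : ℂ)) = (xi n : ℂ) := by
        exact_mod_cast congrArg (Nat.cast : ℕ → ℂ) (binom_mul_xi hdvd hn)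
      have h1 : (xi d : ℂ) ≠ 0 := Nat.cast_ne_zero.mpr (xi_ne_zero d)
      have h2 : (xi (n / d) : ℂ) ≠ 0 := Nat.cast_ne_zero.mpr (xi_ne_zero (n / d))
      have h3 : (xi n : ℂ) ≠ 0 := Nat.cast_ne_zero.mpr (xi_ne_zero n)
      rw [hF, hG]
      field_simp
      linear_combination (-(f d * g (n / d))) * key
    rw [term_of_ne_zero hn, hconv, edsTerm, div_div]
  have hFsum : LSeriesSummable F s := by
    refine (summable_nat_add_iff 1).mp ?_
    refine Summable.of_norm ?_
    refine hf.congr fun n => ?_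
    rw [hTermF (n + 1) n.succ_ne_zero]
  have hGsum : LSeriesSummable G s := by
    refine (summable_nat_add_iff 1).mp ?_
    refine Summable.of_norm ?_
    refine hg.congr fun n => ?_
    rw [hTermG (n + 1) n.succ_ne_zero]
  have hCsum : LSeriesSummable (F ⍟ G) s := hFsum.convolution hGsum
  have shift : ∀ (h : ℕ → ℂ), Summable h → h 0 = 0 →
      ∑' n : ℕ, h n = ∑' n : ℕ, h (n + 1) := by
    intro h hs h0
    rw [Summable.tsum_eq_zero_add hs, h0, zero_add]
  calc (∑' n : ℕ, edsTerm f s (n + 1)) * (∑' n : ℕ, edsTerm g s (n + 1))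
      = LSeries F s * LSeries G s := by
        rw [LSeries, LSeries, shift _ hFsum (term_zero ..), shift _ hGsum (term_zero ..)]
        congr 1 <;> refine tsum_congr fun n => ?_
        · exact (hTermF (n + 1) n.succ_ne_zero).symm
        · exact (hTermG (n + 1) n.succ_ne_zero).symm
    _ = LSeries (F ⍟ G) s := (LSeries_convolution' hFsum hGsum).symm
    _ = ∑' n : ℕ, edsTerm (bconv f g) s (n + 1) := by
        rw [LSeries, shift _ hCsum (term_zero ..)]
        exact tsum_congr fun n => hTermC (n + 1) n.succ_ne_zero
end

section
/- Let f : ℕ → ℂ be completely multiplicative and let s be a complex number such that the series ∑_{n≥1} ‖f(n)‖/(ξ(n)·n^{Re s}) converges. Then ∑_{n≥1} f(n)/(ξ(n)·n^s) = exp(∑_{p prime} f(p)/p^s), where the sum over primes converges absolutely. -/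
/-- Completely multiplicative arithmetical function. -/
def IsCompletelyMult (f : ℕ → ℂ) : Prop :=
  f 1 = 1 ∧ ∀ m n : ℕ, 0 < m → 0 < n → f (m * n) = f m * f n

lemma xi_one : xi 1 = 1 := by simp [xi]

lemma xi_mul {m n : ℕ} (hm : m ≠ 0) (hn : n ≠ 0) (h : Nat.Coprime m n) :
    xi (m * n) = xi m * xi n := by
  unfold xi
  rw [Nat.primeFactors_mul hm hn,
    Finset.prod_union (Nat.Coprime.disjoint_primeFactors h)]
  have hdisj := Nat.Coprime.disjoint_primeFactors h
  congr 1
  · refine Finset.prod_congr rfl fun p hp => ?_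
    have hpn : n.factorization p = 0 := by
      have : p ∉ n.primeFactors := Finset.disjoint_left.mp hdisj hp
      rwa [← Nat.support_factorization, Finsupp.notMem_support_iff] at this
    rw [Nat.factorization_mul hm hn, Finsupp.add_apply, hpn, add_zero]
  · refine Finset.prod_congr rfl fun p hp => ?_
    have hpm : m.factorization p = 0 := by
      have : p ∉ m.primeFactors := Finset.disjoint_right.mp hdisj hp
      rwa [← Nat.support_factorization, Finsupp.notMem_support_iff] at this
    rw [Nat.factorization_mul hm hn, Finsupp.add_apply, hpm, zero_add]

lemma xi_prime_pow {p : ℕ} (hp : p.Prime) (e : ℕ) : xi (p ^ e) = e.factorial := by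
  rcases Nat.eq_zero_or_pos e with rfl | he
  · simp [xi_one]
  · unfold xi
    rw [Nat.primeFactors_prime_pow he.ne' hp, Finset.prod_singleton,
      Nat.Prime.factorization_pow hp, Finsupp.single_eq_same]

lemma f_prime_pow {f : ℕ → ℂ} (hf : IsCompletelyMult f) {p : ℕ} (hp : 0 < p) (e : ℕ) :
    f (p ^ e) = f p ^ e := by
  induction e with
  | zero => simpa using hf.1
  | succ k ih => rw [pow_succ, hf.2 _ _ (pow_pos hp k) hp, ih, pow_succ]

/-- If `f` is completely multiplicative and its exponential Dirichlet series
`D̃(f,s) = ∑_{n≥1} f(n)/(ξ(n)·n^s)` converges absolutely at `s`, then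
`D̃(f,s) = exp(∑_p f(p)/p^s)`, the series over primes converging absolutely. -/
theorem eds_of_completely_multiplicative (f : ℕ → ℂ) (hf : IsCompletelyMult f) (s : ℂ)
    (habs : Summable fun n : ℕ => ‖f (n + 1)‖ / ((xi (n + 1) : ℝ) * ((n + 1 : ℕ) : ℝ) ^ s.re)) :
    (Summable fun p : Nat.Primes => ‖f (p : ℕ) / ((p : ℕ) : ℂ) ^ s‖) ∧
      ∑' n : ℕ, f (n + 1) / ((xi (n + 1) : ℂ) * ((n + 1 : ℕ) : ℂ) ^ s) =
        Complex.exp (∑' p : Nat.Primes, f (p : ℕ) / ((p : ℕ) : ℂ) ^ s) := by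
  set g : ℕ → ℂ := fun n => if n = 0 then 0 else f n / ((xi n : ℂ) * (n : ℂ) ^ s) with hg
  have hg0 : g 0 = 0 := rfl
  have hgS : ∀ n : ℕ, g (n + 1) = f (n + 1) / ((xi (n + 1) : ℂ) * ((n + 1 : ℕ) : ℂ) ^ s) := by
    intro n; simp [hg]
  have hg1 : g 1 = 1 := by
    rw [show (1 : ℕ) = 0 + 1 from rfl, hgS, xi_one, hf.1]
    norm_num
  have hgmul : ∀ {m n : ℕ}, Nat.Coprime m n → g (m * n) = g m * g n := by
    intro m n h
    rcases Nat.eq_zero_or_pos m with rfl | hm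
    · simp [hg]
    rcases Nat.eq_zero_or_pos n with rfl | hn
    · simp [hg]
    have hmn : m * n ≠ 0 := Nat.mul_ne_zero hm.ne' hn.ne'
    simp only [hg, if_neg hmn, if_neg hm.ne', if_neg hn.ne']
    rw [hf.2 m n hm hn, xi_mul hm.ne' hn.ne' h, Nat.cast_mul m n,
      Complex.natCast_mul_natCast_cpow, Nat.cast_mul (xi m) (xi n), div_mul_div_comm]
    ring_nf
  have hnorm : ∀ n : ℕ, ‖g (n + 1)‖ =
      ‖f (n + 1)‖ / ((xi (n + 1) : ℝ) * ((n + 1 : ℕ) : ℝ) ^ s.re) := by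
    intro n
    rw [hgS, norm_div, norm_mul, Complex.norm_natCast,
      Complex.norm_natCast_cpow_of_pos (Nat.succ_pos n)]
  have hsum : Summable fun n => ‖g n‖ := by
    rw [← summable_nat_add_iff 1]
    exact habs.congr fun n => (hnorm n).symm
  have hpp : ∀ (p : Nat.Primes) (e : ℕ),
      g ((p : ℕ) ^ e) = (f (p : ℕ) / ((p : ℕ) : ℂ) ^ s) ^ e / (e.factorial : ℂ) := by
    intro p e
    have hp := p.prop
    have hpe : (p : ℕ) ^ e ≠ 0 := pow_ne_zero e hp.pos.ne'
    simp only [hg, if_neg hpe]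
    rw [f_prime_pow hf hp.pos, xi_prime_pow hp, Nat.cast_pow,
      ← Complex.natCast_cpow_natCast_mul, Complex.cpow_nat_mul, div_pow, div_div,
      mul_comm ((((p : ℕ) : ℂ) ^ s) ^ e) ((e.factorial : ℂ))]
  have hexp : ∀ p : Nat.Primes,
      (∑' e : ℕ, g ((p : ℕ) ^ e)) = Complex.exp (f (p : ℕ) / ((p : ℕ) : ℂ) ^ s) := by
    intro p
    simp only [hpp p]
    rw [Complex.exp_eq_exp_ℂ, NormedSpace.exp_eq_tsum_div]
  have hps : Summable fun p : Nat.Primes => ‖f (p : ℕ) / ((p : ℕ) : ℂ) ^ s‖ := by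
    have : ∀ p : Nat.Primes, ‖f (p : ℕ) / ((p : ℕ) : ℂ) ^ s‖ = ‖g (p : ℕ)‖ := by
      intro p
      have := hpp p 1
      simp only [pow_one, Nat.factorial_one, Nat.cast_one, div_one] at this
      rw [this]
    simp only [this]
    exact (hsum.comp_injective (fun p q h => Subtype.ext h))
  refine ⟨hps, ?_⟩
  have HP := EulerProduct.eulerProduct_hasProd hg1 hgmul hsum hg0
  simp only [hexp] at HP
  have h2 : HasProd (fun p : Nat.Primes => Complex.exp (f (p : ℕ) / ((p : ℕ) : ℂ) ^ s))
      (Complex.exp (∑' p : Nat.Primes, f (p : ℕ) / ((p : ℕ) : ℂ) ^ s)) :=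
    hps.of_norm.hasSum.cexp
  have key : (∑' n, g n) = Complex.exp (∑' p : Nat.Primes, f (p : ℕ) / ((p : ℕ) : ℂ) ^ s) :=
    HP.tprod_eq.symm.trans h2.tprod_eq
  calc ∑' n : ℕ, f (n + 1) / ((xi (n + 1) : ℂ) * ((n + 1 : ℕ) : ℂ) ^ s)
      = ∑' n : ℕ, g (n + 1) := tsum_congr fun n => (hgS n).symm
    _ = g 0 + ∑' n : ℕ, g (n + 1) := by rw [hg0, zero_add]
    _ = ∑' n, g n := (Summable.tsum_eq_zero_add hsum.of_norm).symm
    _ = _ := key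
end
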